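/- arXiv:1512.03572 — 3 statements merged into one kernel-verified Lean document; each statement's English description precedes it below -/
import Mathlib

section
/- The quotient metric space (𝔾*, d) of countable connected rooted graphs modulo d = 0 is complete: every Cauchy sequence converges. -/
open scoped ENNReal

structure RGraph where
  verts : Set ℕ
  adj : SimpleGraph verts
  root : verts

namespace RGraph

def Iso (A B : RGraph) : Prop :=
  ∃ e : A.adj ≃g B.adj, e A.root = B.root

def HasRCIS (A F : RGraph) : Prop :=
  ∃ S : Set A.verts, ∃ hroot : A.root ∈ S,
    (A.adj.induce S).Connected ∧
    ∃ e : A.adj.induce S ≃g F.adj, (e ⟨A.root, hroot⟩ : F.verts) = F.root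

/-- `A` and `B` contain exactly the same isomorphism types of rooted connected
induced subgraphs on at most `r` vertices. -/
def simUpTo (r : ℕ) (A B : RGraph) : Prop :=
  ∀ F : RGraph, Finite F.verts → Nat.card F.verts ≤ r →
    (A.HasRCIS F ↔ B.HasRCIS F)

/-- The radius of similarity `r(A,B) ∈ ℕ ∪ {∞}`. -/
noncomputable def rSimE (A B : RGraph) : ℕ∞ :=
  sSup {x : ℕ∞ | ∃ r : ℕ, x = (r : ℕ∞) ∧ simUpTo r A B}

/-- The similarity pseudometric `d(A,B) = 1/r(A,B)`, with `1/∞ = 0`. -/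
noncomputable def dR (A B : RGraph) : ℝ≥0∞ :=
  (sSup {x : ℝ≥0∞ | ∃ r : ℕ, x = (r : ℝ≥0∞) ∧ simUpTo r A B})⁻¹

end RGraph

/-- Countable connected rooted graph. -/
def CRGraph := {R : RGraph // R.adj.Connected}

noncomputable def dC (A B : CRGraph) : ℝ≥0∞ := RGraph.dR A.1 B.1

/-!
Along a sequence that is Cauchy for `d`, whether `u n` contains a given finite rooted graph `F`
as a rooted connected induced subgraph is eventually constant in `n`. The limit is the union of
an increasing chain of finite rooted graphs on labels in `ℕ`, each eventually contained in the
`u n`: at stage `k` the chain absorbs the `k`-th finite rooted graph of an enumeration up to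
isomorphism, provided it is eventually contained. Absorbing is possible because two such
subgraphs of a single `u n` amalgamate into the subgraph induced on their union, whose size is
bounded, so it is again eventually contained. The union of the chain then contains exactly the
eventually contained finite rooted graphs, which makes it the limit.
-/

open Filter SimpleGraph Function

namespace RGraph

def EmbedsInto (F A : RGraph) : Prop :=
  ∃ φ : F.adj ↪g A.adj, φ F.root = A.root

theorem EmbedsInto.trans {F A B : RGraph} (hFA : F.EmbedsInto A) (hAB : A.EmbedsInto B) :
    F.EmbedsInto B := by
  obtain ⟨φ, hφ⟩ := hFA
  obtain ⟨ψ, hψ⟩ := hAB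
  exact ⟨ψ.comp φ, by simp [hφ, hψ]⟩

theorem hasRCIS_iff {A F : RGraph} : A.HasRCIS F ↔ F.adj.Connected ∧ F.EmbedsInto A := by
  constructor
  · rintro ⟨S, hS, hconn, e, he⟩
    refine ⟨e.connected_iff.1 hconn, (Embedding.induce S).comp e.symm.toEmbedding, ?_⟩
    simp [← he]
  · rintro ⟨hconn, φ, hφ⟩
    refine ⟨Set.range φ, ⟨F.root, hφ⟩, φ.isoInduceRange.connected_iff.1 hconn,
      φ.isoInduceRange.symm, ?_⟩
    rw [RelIso.symm_apply_eq]
    exact Subtype.ext hφ.symm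

theorem HasRCIS.connected {A F : RGraph} (h : A.HasRCIS F) : F.adj.Connected :=
  (hasRCIS_iff.1 h).1

theorem HasRCIS.trans {A B F : RGraph} (hAB : A.HasRCIS B) (hBF : B.HasRCIS F) :
    A.HasRCIS F :=
  hasRCIS_iff.2 ⟨hBF.connected, (hasRCIS_iff.1 hBF).2.trans (hasRCIS_iff.1 hAB).2⟩

theorem hasRCIS_congr_right {A F F' : RGraph} (h : Iso F F') :
    A.HasRCIS F ↔ A.HasRCIS F' := by
  obtain ⟨g, hg⟩ := h
  constructor
  · rintro ⟨S, hS, hScon, e, he⟩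
    exact ⟨S, hS, hScon, e.trans g, by rw [RelIso.trans_apply, he, hg]⟩
  · rintro ⟨S, hS, hScon, e, he⟩
    refine ⟨S, hS, hScon, e.trans g.symm, ?_⟩
    rw [RelIso.trans_apply, he, ← hg, RelIso.symm_apply_apply]


/-- `P ≤ Q`: `P` is an induced rooted subgraph of `Q` carrying the same vertex labels. -/
instance : Preorder RGraph where
  le P Q := ∃ φ : P.adj ↪g Q.adj, φ P.root = Q.root ∧ ∀ x, (φ x : ℕ) = x
  le_refl P := ⟨Embedding.refl, rfl, fun _ => rfl⟩
  le_trans _ _ _ := by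
    rintro ⟨φ, hφr, hφ⟩ ⟨ψ, hψr, hψ⟩
    exact ⟨ψ.comp φ, by simp [hφr, hψr], fun x => by simp [hψ, hφ]⟩

theorem EmbedsInto.of_le {P Q : RGraph} (h : P ≤ Q) : P.EmbedsInto Q :=
  let ⟨φ, hφr, _⟩ := h; ⟨φ, hφr⟩

theorem verts_subset_of_le {P Q : RGraph} (h : P ≤ Q) : P.verts ⊆ Q.verts := by
  obtain ⟨φ, -, hφ⟩ := h
  intro x hx
  simpa [hφ] using (φ ⟨x, hx⟩).2

theorem adj_iff_of_le {P Q : RGraph} (h : P ≤ Q) {x y : ℕ} (hx : x ∈ P.verts)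
    (hy : y ∈ P.verts) (hx' : x ∈ Q.verts) (hy' : y ∈ Q.verts) :
    Q.adj.Adj ⟨x, hx'⟩ ⟨y, hy'⟩ ↔ P.adj.Adj ⟨x, hx⟩ ⟨y, hy⟩ := by
  obtain ⟨φ, -, hφ⟩ := h
  have hφx : φ ⟨x, hx⟩ = ⟨x, hx'⟩ := Subtype.ext (hφ _)
  have hφy : φ ⟨y, hy⟩ = ⟨y, hy'⟩ := Subtype.ext (hφ _)
  rw [← hφx, ← hφy, φ.map_adj_iff]

theorem EmbedsInto.of_le_of_mem {F Q L : RGraph} (hQL : Q ≤ L) (φ : F.adj ↪g L.adj)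
    (hφr : φ F.root = L.root) (hφ : ∀ x, (φ x : ℕ) ∈ Q.verts) : F.EmbedsInto Q := by
  obtain ⟨θ, hθr, hθ⟩ := hQL
  have hθφ : ∀ x, θ ⟨φ x, hφ x⟩ = φ x := fun x => Subtype.ext (hθ _)
  refine ⟨⟨⟨fun x => ⟨φ x, hφ x⟩, fun x y hxy => φ.injective (Subtype.ext (Subtype.mk.inj hxy))⟩,
    ?_⟩, θ.injective ((hθφ F.root).trans (hφr.trans hθr.symm))⟩
  intro x y
  change Q.adj.Adj ⟨φ x, hφ x⟩ ⟨φ y, hφ y⟩ ↔ F.adj.Adj x y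
  rw [← θ.map_adj_iff, hθφ, hθφ, φ.map_adj_iff]

def chainSup (P : ℕ → RGraph) : RGraph where
  verts := ⋃ k, (P k).verts
  adj := SimpleGraph.fromRel fun x y =>
    ∃ k, ∃ (hx : x.1 ∈ (P k).verts) (hy : y.1 ∈ (P k).verts), (P k).adj.Adj ⟨x, hx⟩ ⟨y, hy⟩
  root := ⟨(P 0).root, Set.mem_iUnion_of_mem 0 (P 0).root.2⟩

section chainSup

variable {P : ℕ → RGraph}

theorem le_chainSup (hP : Monotone P) (k : ℕ) : P k ≤ chainSup P := by
  have hmem : ∀ x : (P k).verts, (x : ℕ) ∈ (chainSup P).verts :=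
    fun x => Set.mem_iUnion_of_mem k x.2
  have hadj : ∀ x y : (P k).verts,
      (chainSup P).adj.Adj ⟨x, hmem x⟩ ⟨y, hmem y⟩ ↔ (P k).adj.Adj x y := by
    rintro ⟨x, hx⟩ ⟨y, hy⟩
    have agree : ∀ k' (hx' : x ∈ (P k').verts) (hy' : y ∈ (P k').verts),
        (P k').adj.Adj ⟨x, hx'⟩ ⟨y, hy'⟩ ↔ (P k).adj.Adj ⟨x, hx⟩ ⟨y, hy⟩ := fun k' hx' hy' => by
      have hk := verts_subset_of_le (hP (le_max_left k k'))
      rw [← adj_iff_of_le (hP (le_max_right k k')) hx' hy' (hk hx) (hk hy),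
        adj_iff_of_le (hP (le_max_left k k')) hx hy]
    constructor
    · rintro ⟨-, ⟨k', hx', hy', h⟩ | ⟨k', hy', hx', h⟩⟩
      exacts [(agree k' hx' hy').1 h, (agree k' hx' hy').1 h.symm]
    · intro h
      exact ⟨fun hxy => h.ne (Subtype.ext (Subtype.mk.inj hxy)), Or.inl ⟨k, hx, hy, h⟩⟩
  refine ⟨⟨⟨fun x => ⟨x, hmem x⟩, fun x y hxy => Subtype.ext (Subtype.mk.inj hxy)⟩,
    hadj _ _⟩, ?_, fun _ => rfl⟩
  obtain ⟨φ, hφr, hφ⟩ := hP (Nat.zero_le k)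
  exact Subtype.ext ((congrArg Subtype.val hφr).symm.trans (hφ _))

theorem chainSup_connected (hP : Monotone P) (hconn : ∀ k, (P k).adj.Connected) :
    (chainSup P).adj.Connected := by
  refine (connected_iff_exists_forall_reachable _).2 ⟨(chainSup P).root, ?_⟩
  rintro ⟨x, hx⟩
  obtain ⟨k, hk⟩ := Set.mem_iUnion.1 hx
  obtain ⟨φ, hφr, hφ⟩ := le_chainSup hP k
  have hφx : φ ⟨x, hk⟩ = ⟨x, hx⟩ := Subtype.ext (hφ _)
  simpa [hφr, hφx] using ((hconn k).preconnected (P k).root ⟨x, hk⟩).map φ.toHom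

theorem exists_hasRCIS_of_chainSup (hP : Monotone P) {F : RGraph} [Finite F.verts]
    (h : (chainSup P).HasRCIS F) : ∃ k, (P k).HasRCIS F := by
  obtain ⟨hconn, φ, hφr⟩ := hasRCIS_iff.1 h
  choose stage hstage using fun x => Set.mem_iUnion.1 (φ x).2
  obtain ⟨K, hK⟩ := Finite.exists_le stage
  exact ⟨K, hasRCIS_iff.2 ⟨hconn, EmbedsInto.of_le_of_mem (le_chainSup hP K) φ hφr
    fun x => verts_subset_of_le (hP (hK x)) (hstage x)⟩⟩

end chainSup


section relabel

variable {W : Type*} (G : SimpleGraph W) (w : W) {ι : W → ℕ} (hι : Injective ι)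

noncomputable def relabel : RGraph where
  verts := Set.range ι
  adj := G.map (Equiv.ofInjective ι hι)
  root := Equiv.ofInjective ι hι w

noncomputable def relabelIso : G ≃g (relabel G w hι).adj :=
  Iso.map _ G

theorem relabelIso_root : relabelIso G w hι w = (relabel G w hι).root :=
  rfl

end relabel

theorem exists_injective_extend_val {β : Type*} [Countable β] {P : Set ℕ} (hP : P.Finite)
    {φ : P → β} (hφ : Injective φ) : ∃ lab : β → ℕ, Injective lab ∧ ∀ p, lab (φ p) = p := by
  obtain ⟨σ, hσ⟩ := Countable.exists_injective_nat β
  obtain ⟨M, hM⟩ := hP.bddAbove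
  -- points outside the range of `φ` get fresh labels above `M ≥ P`
  have hlab_of_not_mem : ∀ b, (¬∃ p, φ p = b) →
      extend φ Subtype.val (M + 1 + σ ·) b = M + 1 + σ b :=
    fun b hb => extend_apply' _ _ b hb
  refine ⟨extend φ Subtype.val (M + 1 + σ ·), fun a b hab => ?_, hφ.extend_apply _ _⟩
  by_cases ha : ∃ p, φ p = a <;> by_cases hb : ∃ q, φ q = b
  · obtain ⟨p, rfl⟩ := ha
    obtain ⟨q, rfl⟩ := hb
    rw [hφ.extend_apply, hφ.extend_apply] at hab
    rw [Subtype.ext hab]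
  · obtain ⟨p, rfl⟩ := ha
    rw [hφ.extend_apply, hlab_of_not_mem b hb] at hab
    have := hM p.2
    omega
  · obtain ⟨q, rfl⟩ := hb
    rw [hφ.extend_apply, hlab_of_not_mem a ha] at hab
    have := hM q.2
    omega
  · rw [hlab_of_not_mem a ha, hlab_of_not_mem b hb] at hab
    exact hσ (by omega)

noncomputable def _root_.SimpleGraph.Embedding.induceOfRangeSubset {V W : Type*}
    {H : SimpleGraph V} {G : SimpleGraph W} (φ : H ↪g G) {s : Set W} (hs : Set.range φ ⊆ s) :
    H ↪g G.induce s :=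
  (G.induceHomOfLE hs).comp φ.isoInduceRange.toEmbedding

-- Amalgamation: `Q` is `V` induced on the union of the images of `P` and `F`, relabelled so
-- that the vertices coming from `P` keep their labels.
theorem exists_le_hasRCIS {V P F : RGraph} [Finite P.verts] [Finite F.verts]
    (hP : V.HasRCIS P) (hF : V.HasRCIS F) :
    ∃ Q, P ≤ Q ∧ Finite Q.verts ∧ Nat.card Q.verts ≤ Nat.card P.verts + Nat.card F.verts ∧
      V.HasRCIS Q ∧ Q.HasRCIS F := by
  obtain ⟨hPc, φ, hφr⟩ := hasRCIS_iff.1 hP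
  obtain ⟨hFc, ψ, hψr⟩ := hasRCIS_iff.1 hF
  obtain ⟨lab, hlab, hlabφ⟩ := exists_injective_extend_val (Set.toFinite P.verts) φ.injective
  set U := Set.range φ ∪ Set.range ψ
  have hrootU : V.root ∈ U := Or.inl ⟨P.root, hφr⟩
  have hUc : (V.adj.induce U).Connected :=
    induce_union_connected (φ.isoInduceRange.connected_iff.1 hPc).preconnected
      (ψ.isoInduceRange.connected_iff.1 hFc).preconnected ⟨V.root, ⟨P.root, hφr⟩, ⟨F.root, hψr⟩⟩
  have hlabU : Injective (lab ∘ Subtype.val : U → ℕ) := hlab.comp Subtype.val_injective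
  let Q := relabel (V.adj.induce U) ⟨V.root, hrootU⟩ hlabU
  let e : V.adj.induce U ≃g Q.adj := relabelIso _ _ _
  have hQr : e ⟨V.root, hrootU⟩ = Q.root := relabelIso_root _ _ _
  let φU := φ.induceOfRangeSubset (s := U) Set.subset_union_left
  let ψU := ψ.induceOfRangeSubset (s := U) Set.subset_union_right
  have : Finite U := ((Set.finite_range φ).union (Set.finite_range ψ)).to_subtype
  refine ⟨Q, ⟨e.toEmbedding.comp φU, ?_, fun p => hlabφ p⟩, Set.finite_range _, ?_,
    hasRCIS_iff.2 ⟨e.connected_iff.1 hUc, (Embedding.induce U).comp e.symm.toEmbedding, ?_⟩,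
    hasRCIS_iff.2 ⟨hFc, e.toEmbedding.comp ψU, ?_⟩⟩
  · rw [← hQr]
    exact congrArg e (Subtype.ext hφr)
  · calc Nat.card Q.verts = Nat.card U := Nat.card_range_of_injective hlabU
      _ ≤ Nat.card (Set.range φ) + Nat.card (Set.range ψ) := by
        simpa only [Nat.card_coe_set_eq] using Set.ncard_union_le _ _
      _ = Nat.card P.verts + Nat.card F.verts := by
        rw [Nat.card_range_of_injective φ.injective, Nat.card_range_of_injective ψ.injective]
  · rw [← hQr]
    simp
  · rw [← hQr]
    exact congrArg e (Subtype.ext hψr)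


def SimCauchy (u : ℕ → RGraph) : Prop :=
  ∀ r, ∃ N, ∀ m ≥ N, ∀ n ≥ N, simUpTo r (u m) (u n)

def EventuallyHasRCIS (u : ℕ → RGraph) (F : RGraph) : Prop :=
  ∀ᶠ n in atTop, (u n).HasRCIS F

section Limit

variable {u : ℕ → RGraph}

theorem hasRCIS_iff_eventuallyHasRCIS {r N n : ℕ}
    (hN : ∀ m ≥ N, ∀ n ≥ N, simUpTo r (u m) (u n)) (hn : N ≤ n) {F : RGraph}
    (hF : Finite F.verts) (hcard : Nat.card F.verts ≤ r) :
    (u n).HasRCIS F ↔ EventuallyHasRCIS u F := by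
  refine ⟨fun h => eventually_atTop.2 ⟨N, fun m hm => (hN n hn m hm F hF hcard).1 h⟩, fun h => ?_⟩
  obtain ⟨m, hmF, hm⟩ := (h.and (eventually_ge_atTop N)).exists
  exact (hN m hm n hn F hF hcard).1 hmF

theorem EventuallyHasRCIS.connected {F : RGraph} (h : EventuallyHasRCIS u F) : F.adj.Connected :=
  h.exists.choose_spec.connected

theorem SimCauchy.exists_le_eventuallyHasRCIS (hu : SimCauchy u) {P F : RGraph}
    [Finite P.verts] [Finite F.verts] (hP : EventuallyHasRCIS u P) (hF : EventuallyHasRCIS u F) :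
    ∃ Q, P ≤ Q ∧ Finite Q.verts ∧ EventuallyHasRCIS u Q ∧ Q.HasRCIS F := by
  obtain ⟨N, hN⟩ := hu (Nat.card P.verts + Nat.card F.verts)
  obtain ⟨n, ⟨hnP, hnF⟩, hn⟩ := ((hP.and hF).and (eventually_ge_atTop N)).exists
  obtain ⟨Q, hPQ, hQ, hcard, hnQ, hQF⟩ := exists_le_hasRCIS hnP hnF
  exact ⟨Q, hPQ, hQ, (hasRCIS_iff_eventuallyHasRCIS hN hn hQ hcard).1 hnQ, hQF⟩

def point : RGraph where
  verts := {0}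
  adj := ⊥
  root := ⟨0, rfl⟩

theorem hasRCIS_point (A : RGraph) : A.HasRCIS point := by
  have : Unique point.verts := Set.uniqueSingleton 0
  refine hasRCIS_iff.2 ⟨.of_subsingleton, ⟨⟨fun _ => A.root, fun x y _ => Subsingleton.elim x y⟩,
    fun {x y} => ?_⟩, rfl⟩
  exact iff_of_false A.adj.irrefl fun h => h

open Classical in
noncomputable def absorb (u : ℕ → RGraph) (P F : RGraph) : RGraph :=
  if h : ∃ Q, P ≤ Q ∧ Finite Q.verts ∧ EventuallyHasRCIS u Q ∧ Q.HasRCIS F then h.choose else P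

noncomputable def absorbAll (u : ℕ → RGraph) (F : ℕ → RGraph) : ℕ → RGraph
  | 0 => point
  | k + 1 => absorb u (absorbAll u F k) (F k)

variable (F : ℕ → RGraph)

theorem absorbAll_monotone : Monotone (absorbAll u F) := by
  refine monotone_nat_of_le_succ fun k => ?_
  simp only [absorbAll, absorb]
  split_ifs with h
  exacts [h.choose_spec.1, le_rfl]

theorem absorbAll_spec (k : ℕ) :
    Finite (absorbAll u F k).verts ∧ EventuallyHasRCIS u (absorbAll u F k) := by
  induction k with
  | zero => exact ⟨Set.finite_singleton 0, Eventually.of_forall fun n => hasRCIS_point (u n)⟩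
  | succ k ih =>
    simp only [absorbAll, absorb]
    split_ifs with h
    exacts [⟨h.choose_spec.2.1, h.choose_spec.2.2.1⟩, ih]

theorem SimCauchy.hasRCIS_absorbAll_succ (hu : SimCauchy u) {k : ℕ} [Finite (F k).verts]
    (hF : EventuallyHasRCIS u (F k)) : (absorbAll u F (k + 1)).HasRCIS (F k) := by
  obtain ⟨hfin, hev⟩ := absorbAll_spec F k
  have h := hu.exists_le_eventuallyHasRCIS hev hF
  simp only [absorbAll, absorb, dif_pos h]
  exact h.choose_spec.2.2.2

end Limit


noncomputable def ofFin (p : Σ n, SimpleGraph (Fin n) × Fin n) : RGraph :=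
  relabel p.2.1 p.2.2 Fin.val_injective

theorem exists_iso_ofFin (F : RGraph) [Finite F.verts] : ∃ p, Iso (ofFin p) F := by
  let e := Finite.equivFin F.verts
  let r := relabelIso (F.adj.map e) (e F.root) Fin.val_injective
  refine ⟨⟨_, F.adj.map e, e F.root⟩, r.symm.trans (Iso.map e F.adj).symm, ?_⟩
  exact (congrArg (Iso.map e F.adj).symm (r.symm_apply_apply (e F.root))).trans
    ((Iso.map e F.adj).symm_apply_apply F.root)

theorem SimCauchy.exists_limit {u : ℕ → RGraph} (hu : SimCauchy u) :
    ∃ L : RGraph, L.adj.Connected ∧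
      ∀ F : RGraph, Finite F.verts → (L.HasRCIS F ↔ EventuallyHasRCIS u F) := by
  have : Nonempty (Σ n, SimpleGraph (Fin n) × Fin n) := ⟨⟨1, ⊥, 0⟩⟩
  obtain ⟨p, hp⟩ := exists_surjective_nat (Σ n, SimpleGraph (Fin n) × Fin n)
  let P := absorbAll u (ofFin ∘ p)
  have hPmono : Monotone P := absorbAll_monotone _
  have hPev : ∀ k, EventuallyHasRCIS u (P k) := fun k => (absorbAll_spec _ k).2
  refine ⟨chainSup P, chainSup_connected hPmono fun k => (hPev k).connected,
    fun F hF => ⟨fun h => ?_, fun h => ?_⟩⟩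
  · obtain ⟨k, hk⟩ := exists_hasRCIS_of_chainSup hPmono h
    exact (hPev k).mono fun n hn => hn.trans hk
  · obtain ⟨q, hq⟩ := exists_iso_ofFin F
    obtain ⟨k, rfl⟩ := hp q
    have : Finite ((ofFin ∘ p) k).verts := Set.finite_range _
    have hk : EventuallyHasRCIS u (ofFin (p k)) := h.mono fun n => (hasRCIS_congr_right hq).2
    have hLP : (chainSup P).HasRCIS (P (k + 1)) :=
      hasRCIS_iff.2 ⟨(hPev _).connected, .of_le (le_chainSup hPmono _)⟩
    exact (hasRCIS_congr_right hq).1 (hLP.trans (hu.hasRCIS_absorbAll_succ (ofFin ∘ p) hk))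

theorem simUpTo_of_dR_lt {A B : RGraph} {r : ℕ} (h : dR A B < (r : ℝ≥0∞)⁻¹) :
    simUpTo r A B := by
  obtain ⟨_, ⟨s, rfl, hs⟩, hrs⟩ := lt_sSup_iff.1 (ENNReal.inv_lt_inv.1 h)
  exact fun F hF hcard => hs F hF (hcard.trans (by exact_mod_cast hrs.le))

theorem dR_le_of_simUpTo {A B : RGraph} {r : ℕ} (h : simUpTo r A B) :
    dR A B ≤ (r : ℝ≥0∞)⁻¹ :=
  ENNReal.inv_le_inv.2 (le_sSup ⟨r, rfl, h⟩)

end RGraph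

/-- The (quotient of the) space of countable connected rooted graphs with the
similarity pseudometric is complete: every Cauchy sequence converges. -/
theorem complete_CRGraph (u : ℕ → CRGraph)
    (hu : ∀ ε : ℝ≥0∞, 0 < ε → ∃ N : ℕ, ∀ m ≥ N, ∀ n ≥ N, dC (u m) (u n) < ε) :
    ∃ L : CRGraph, ∀ ε : ℝ≥0∞, 0 < ε → ∃ N : ℕ, ∀ n ≥ N, dC (u n) L < ε := by
  have hcau : RGraph.SimCauchy fun n => (u n).1 := fun r => by
    obtain ⟨N, hN⟩ := hu _ (ENNReal.inv_pos.2 (ENNReal.natCast_ne_top r))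
    exact ⟨N, fun m hm n hn => RGraph.simUpTo_of_dR_lt (hN m hm n hn)⟩
  obtain ⟨L, hLc, hL⟩ := hcau.exists_limit
  refine ⟨⟨L, hLc⟩, fun ε hε => ?_⟩
  obtain ⟨r, hr⟩ := ENNReal.exists_inv_nat_lt hε.ne'
  obtain ⟨N, hN⟩ := hcau r
  refine ⟨N, fun n hn => lt_of_le_of_lt (RGraph.dR_le_of_simUpTo fun F hF hcard => ?_) hr⟩
  rw [hL F hF]
  exact RGraph.hasRCIS_iff_eventuallyHasRCIS hN hn hF hcard
end

section
/- Let G be the rooted graph obtained as the join (root-identification) of paths of length n for every n ∈ ℕ, and let H be the join of G with one infinite ray. Then d(G,H) = 0, i.e., G and H contain exactly the same isomorphism types of finite rooted connected induced subgraphs, although G and H are not isomorphic. -/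
open scoped ENNReal

/-- Vertex set of the join of one path of length `n` for every `n`:
vertex `0` is the common root, and `Nat.pair n i` (for `1 ≤ i ≤ n`) is the
`i`-th vertex of the path of length `n`. -/
def pathsVerts : Set ℕ :=
  {m | m = 0 ∨ ∃ n i : ℕ, 1 ≤ i ∧ i ≤ n ∧ m = Nat.pair n i}

/-- Edges of the join of paths: the root is joined to the first vertex of each
path, and consecutive vertices of each path are joined. -/
def pathsRel (a b : ℕ) : Prop :=
  (a = 0 ∧ ∃ n : ℕ, 1 ≤ n ∧ b = Nat.pair n 1) ∨
  (∃ n i : ℕ, 1 ≤ i ∧ i + 1 ≤ n ∧ a = Nat.pair n i ∧ b = Nat.pair n (i + 1))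

/-- `G`: the join (root-identification) of paths of length `n` for every `n ∈ ℕ`. -/
def pathsJoin : RGraph :=
  ⟨pathsVerts, SimpleGraph.fromRel (fun a b => pathsRel a.1 b.1), ⟨0, Or.inl rfl⟩⟩

/-- Vertices of the additional infinite ray: `Nat.pair 0 j` for `j ≥ 1`. -/
def rayVerts : Set ℕ := {m | ∃ j : ℕ, 1 ≤ j ∧ m = Nat.pair 0 j}

/-- Edges of the additional infinite ray, attached to the root. -/
def rayRel (a b : ℕ) : Prop :=
  (a = 0 ∧ b = Nat.pair 0 1) ∨
  (∃ j : ℕ, 1 ≤ j ∧ a = Nat.pair 0 j ∧ b = Nat.pair 0 (j + 1))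

/-- `H`: the join of `G` with one infinite ray. -/
def pathsRayJoin : RGraph :=
  ⟨pathsVerts ∪ rayVerts,
    SimpleGraph.fromRel (fun a b => pathsRel a.1 b.1 ∨ rayRel a.1 b.1),
    ⟨0, Or.inl (Or.inl rfl)⟩⟩

/-! The ray of `H` is invisible to finite subgraphs: on the vertices with code at most `N`,
replacing the ray by the path of length `N + 1` (none of whose vertices has code at most `N`)
is an isomorphism onto an induced subgraph of `G`, and `G` is itself an induced subgraph of `H`.
Yet `H` has an infinite injective walk from the root, while in `G` such a walk is trapped, after
its first step, in one finite path. -/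

open SimpleGraph

namespace RGraph

variable {A B F : RGraph}

theorem hasRCIS_of_induce_embedding {S : Set A.verts} (hr : A.root ∈ S)
    (hc : (A.adj.induce S).Connected) (e : A.adj.induce S ≃g F.adj)
    (he : e ⟨A.root, hr⟩ = F.root) (φ : A.adj.induce S ↪g B.adj)
    (hφ : φ ⟨A.root, hr⟩ = B.root) : B.HasRCIS F := by
  let ψ := φ.isoInduceRange
  have hψ : ψ ⟨A.root, hr⟩ = ⟨B.root, ⟨_, hφ⟩⟩ := Subtype.ext hφ
  refine ⟨Set.range φ, ⟨_, hφ⟩, ψ.connected_iff.mp hc, ψ.symm.trans e, ?_⟩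
  rw [RelIso.trans_apply, ← hψ, RelIso.symm_apply_apply, he]

theorem HasRCIS.of_embedding (f : A.adj ↪g B.adj) (hf : f A.root = B.root)
    (h : A.HasRCIS F) : B.HasRCIS F := by
  obtain ⟨S, hr, hc, e, he⟩ := h
  exact hasRCIS_of_induce_embedding hr hc e he (f.comp (Embedding.induce S)) hf

theorem HasRCIS.of_finite_embedding
    (hfin : ∀ S : Set A.verts, S.Finite → ∀ hr : A.root ∈ S,
      ∃ φ : A.adj.induce S ↪g B.adj, φ ⟨A.root, hr⟩ = B.root)
    (hF : Finite F.verts) (h : A.HasRCIS F) : B.HasRCIS F := by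
  obtain ⟨S, hr, hc, e, he⟩ := h
  have : Finite S := .of_equiv _ e.toEquiv.symm
  obtain ⟨φ, hφ⟩ := hfin S S.toFinite hr
  exact hasRCIS_of_induce_embedding hr hc e he φ hφ

theorem dR_eq_zero_of_forall_simUpTo (h : ∀ r, simUpTo r A B) : dR A B = 0 := by
  have hset : {x : ℝ≥0∞ | ∃ r : ℕ, x = r ∧ simUpTo r A B} = Set.range Nat.cast := by
    ext x
    simp only [Set.mem_ofPred_eq, Set.mem_range, h, and_true, eq_comm]
  rw [dR, hset, sSup_range, ENNReal.iSup_natCast, ENNReal.inv_top]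

def HasRay (A : RGraph) : Prop :=
  ∃ f : ℕ → A.verts, Function.Injective f ∧ f 0 = A.root ∧ ∀ j, A.adj.Adj (f j) (f (j + 1))

theorem HasRay.of_iso (e : A.Iso B) (h : B.HasRay) : A.HasRay := by
  obtain ⟨e, he⟩ := e
  obtain ⟨f, hinj, h0, hadj⟩ := h
  refine ⟨e.symm ∘ f, e.symm.injective.comp hinj, ?_, fun j => e.symm.map_adj_iff.mpr (hadj j)⟩
  rw [Function.comp_apply, h0, ← he, RelIso.symm_apply_apply]

end RGraph

theorem Nat.pair_eq_zero_iff {n i : ℕ} : Nat.pair n i = 0 ↔ n = 0 ∧ i = 0 := by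
  refine ⟨fun h => ?_, fun ⟨hn, hi⟩ => by subst hn hi; rfl⟩
  have := Nat.left_le_pair n i
  have := Nat.right_le_pair n i
  omega

/-- The vertex at depth `i` of branch `n` in the encoding of `pathsVerts` and `rayVerts`
(branch `0` is the ray); every branch starts at the root `0`. -/
def vtx (n i : ℕ) : ℕ := if i = 0 then 0 else Nat.pair n i

theorem vtx_zero_right (n : ℕ) : vtx n 0 = 0 := rfl

theorem vtx_eq_vtx_iff {n i m j : ℕ} : vtx n i = vtx m j ↔ i = j ∧ (i = 0 ∨ n = m) := by
  unfold vtx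
  split_ifs <;> simp_all [Nat.pair_eq_pair, Nat.pair_eq_zero_iff, eq_comm (a := 0), and_comm]

theorem unpair_vtx (n : ℕ) {i : ℕ} (hi : i ≠ 0) : Nat.unpair (vtx n i) = (n, i) := by
  rw [vtx, if_neg hi, Nat.unpair_pair]

theorem le_of_vtx_le {n i N : ℕ} (h : vtx n i ≤ N) : i ≤ N ∧ (i = 0 ∨ n ≤ N) := by
  unfold vtx at h
  have := Nat.left_le_pair n i
  have := Nat.right_le_pair n i
  split_ifs at h <;> omega

theorem mem_pathsVerts_iff {m : ℕ} : m ∈ pathsVerts ↔ ∃ n i, i ≤ n ∧ m = vtx n i := by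
  constructor
  · rintro (rfl | ⟨n, i, hi, hin, rfl⟩)
    · exact ⟨0, 0, le_rfl, rfl⟩
    · exact ⟨n, i, hin, (if_neg (by omega)).symm⟩
  · rintro ⟨n, i, hin, rfl⟩
    unfold vtx
    split_ifs with hi
    · exact Or.inl rfl
    · exact Or.inr ⟨n, i, by omega, hin, rfl⟩

theorem mem_pathsVerts_union_rayVerts_iff {m : ℕ} :
    m ∈ pathsVerts ∪ rayVerts ↔ ∃ n i, (i ≤ n ∨ n = 0) ∧ m = vtx n i := by
  rw [Set.mem_union, mem_pathsVerts_iff]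
  constructor
  · rintro (⟨n, i, hin, rfl⟩ | ⟨i, hi, rfl⟩)
    · exact ⟨n, i, .inl hin, rfl⟩
    · exact ⟨0, i, .inr rfl, (if_neg (by omega)).symm⟩
  · rintro ⟨n, i, hin | rfl, rfl⟩
    · exact .inl ⟨n, i, hin, rfl⟩
    · by_cases hi : i = 0
      · exact .inl ⟨0, 0, le_rfl, by subst hi; rfl⟩
      · exact .inr ⟨i, by omega, if_neg hi⟩

theorem pathsRel_vtx_vtx {n i n' i' : ℕ} :
    pathsRel (vtx n i) (vtx n' i') ↔ i' = i + 1 ∧ i' ≤ n' ∧ (i = 0 ∨ n = n') := by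
  unfold vtx pathsRel
  split_ifs <;>
    simp only [Nat.pair_eq_pair, eq_comm (a := 0), Nat.pair_eq_zero_iff, existsAndEq,
      exists_and_left, true_and, and_true] <;>
    omega

theorem rayRel_vtx_vtx {n i n' i' : ℕ} :
    rayRel (vtx n i) (vtx n' i') ↔ i' = i + 1 ∧ n' = 0 ∧ (i = 0 ∨ n = 0) := by
  unfold vtx rayRel
  split_ifs <;>
    simp only [Nat.pair_eq_pair, eq_comm (a := 0), Nat.pair_eq_zero_iff, existsAndEq,
      true_and, and_true] <;>
    omega

theorem pathsJoin_adj_iff {a b : pathsJoin.verts} {n i n' i' : ℕ}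
    (ha : a.1 = vtx n i) (hb : b.1 = vtx n' i') :
    pathsJoin.adj.Adj a b ↔
      (i' = i + 1 ∧ i' ≤ n' ∧ (i = 0 ∨ n = n')) ∨ (i = i' + 1 ∧ i ≤ n ∧ (i' = 0 ∨ n' = n)) := by
  refine (fromRel_adj _ _ _).trans ?_
  rw [ne_eq, Subtype.ext_iff]
  simp only [ha, hb, vtx_eq_vtx_iff, pathsRel_vtx_vtx]
  omega

theorem pathsRayJoin_adj_iff {a b : pathsRayJoin.verts} {n i n' i' : ℕ}
    (ha : a.1 = vtx n i) (hb : b.1 = vtx n' i') :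
    pathsRayJoin.adj.Adj a b ↔
      (i' = i + 1 ∧ (i' ≤ n' ∨ n' = 0) ∧ (i = 0 ∨ n = n')) ∨
        (i = i' + 1 ∧ (i ≤ n ∨ n = 0) ∧ (i' = 0 ∨ n' = n)) := by
  refine (fromRel_adj _ _ _).trans ?_
  rw [ne_eq, Subtype.ext_iff]
  simp only [ha, hb, vtx_eq_vtx_iff, pathsRel_vtx_vtx, rayRel_vtx_vtx]
  omega

def pathsJoinEmbedding : pathsJoin.adj ↪g pathsRayJoin.adj where
  toFun := Set.inclusion Set.subset_union_left
  inj' := Set.inclusion_injective _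
  map_rel_iff' {a b} := by
    obtain ⟨n, i, hin, ha⟩ := mem_pathsVerts_iff.mp a.2
    obtain ⟨n', i', hin', hb⟩ := mem_pathsVerts_iff.mp b.2
    rw [pathsRayJoin_adj_iff ha hb, pathsJoin_adj_iff ha hb]
    omega

def rayToPath (N m : ℕ) : ℕ :=
  vtx (if (Nat.unpair m).1 = 0 then N + 1 else (Nat.unpair m).1) (Nat.unpair m).2

theorem rayToPath_vtx (N n i : ℕ) :
    rayToPath N (vtx n i) = vtx (if n = 0 then N + 1 else n) i := by
  by_cases hi : i = 0
  · subst hi; rfl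
  · rw [rayToPath, unpair_vtx n hi]

theorem exists_vtx_of_le {v : pathsRayJoin.verts} {N : ℕ} (hv : v.1 ≤ N) :
    ∃ n i, (i ≤ n ∨ n = 0) ∧ i ≤ N ∧ (i = 0 ∨ n ≤ N) ∧ v.1 = vtx n i := by
  obtain ⟨n, i, hin, hv'⟩ := mem_pathsVerts_union_rayVerts_iff.mp v.2
  obtain ⟨hiN, hnN⟩ := le_of_vtx_le (hv' ▸ hv)
  exact ⟨n, i, hin, hiN, hnN, hv'⟩

def rayToPathEmbedding (N : ℕ) : pathsRayJoin.adj.induce {v | v.1 ≤ N} ↪g pathsJoin.adj where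
  toFun v := ⟨rayToPath N v.1.1, by
    obtain ⟨n, i, hin, hiN, -, hv⟩ := exists_vtx_of_le v.2
    rw [hv, rayToPath_vtx]
    exact mem_pathsVerts_iff.mpr ⟨_, i, by split_ifs <;> omega, rfl⟩⟩
  inj' v w h := by
    obtain ⟨n, i, -, hiN, hnN, hv⟩ := exists_vtx_of_le v.2
    obtain ⟨n', i', -, hiN', hnN', hw⟩ := exists_vtx_of_le w.2
    have h := congrArg Subtype.val h
    simp only [hv, hw, rayToPath_vtx, vtx_eq_vtx_iff] at h
    refine Subtype.ext (Subtype.ext ?_)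
    rw [hv, hw, vtx_eq_vtx_iff]
    split_ifs at h <;> omega
  map_rel_iff' {v w} := by
    obtain ⟨n, i, hin, hiN, hnN, hv⟩ := exists_vtx_of_le v.2
    obtain ⟨n', i', hin', hiN', hnN', hw⟩ := exists_vtx_of_le w.2
    change pathsJoin.adj.Adj ⟨rayToPath N v.1.1, _⟩ ⟨rayToPath N w.1.1, _⟩ ↔
      pathsRayJoin.adj.Adj v.1 w.1
    rw [pathsRayJoin_adj_iff hv hw,
      pathsJoin_adj_iff (rayToPath_vtx N n i ▸ congrArg (rayToPath N) hv)
        (rayToPath_vtx N n' i' ▸ congrArg (rayToPath N) hw)]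
    split_ifs <;> omega

theorem pathsRayJoin_finite_embedding (S : Set pathsRayJoin.verts) (hS : S.Finite)
    (hr : pathsRayJoin.root ∈ S) :
    ∃ φ : pathsRayJoin.adj.induce S ↪g pathsJoin.adj, φ ⟨_, hr⟩ = pathsJoin.root := by
  obtain ⟨N, hN⟩ := (hS.image Subtype.val).bddAbove
  exact ⟨(rayToPathEmbedding N).comp (induceHomOfLE _ fun v hv => hN ⟨v, hv, rfl⟩), rfl⟩

theorem pathsRayJoin_hasRay : pathsRayJoin.HasRay := by
  refine ⟨fun j => ⟨vtx 0 j, mem_pathsVerts_union_rayVerts_iff.mpr ⟨0, j, .inr rfl, rfl⟩⟩,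
    fun j k h => ?_, rfl, fun j => ?_⟩
  · exact (vtx_eq_vtx_iff.mp (congrArg Subtype.val h)).1
  · rw [pathsRayJoin_adj_iff (n := 0) (i := j) (n' := 0) (i' := j + 1) rfl rfl]
    omega

theorem pathsJoin_not_hasRay : ¬ pathsJoin.HasRay := by
  rintro ⟨f, hinj, h0, hadj⟩
  choose n i hin hf using fun j => mem_pathsVerts_iff.mp (f j).2
  have hi : ∀ j, i (j + 1) ≠ 0 := by
    intro j h
    have : f (j + 1) = f 0 := Subtype.ext (by rw [hf, h, vtx_zero_right, h0]; rfl)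
    exact j.succ_ne_zero (hinj this)
  -- a walk avoiding the root never leaves the branch it starts in
  have hn : ∀ j, n (j + 1) = n 1 := by
    intro j
    induction j with
    | zero => rfl
    | succ j ih =>
      have := (pathsJoin_adj_iff (hf _) (hf _)).mp (hadj (j + 1))
      have := hi j
      have := hi (j + 1)
      omega
  have hmem : ∀ j, (f (j + 1) : ℕ) ∈ vtx (n 1) '' Set.Iic (n 1) := fun j =>
    ⟨i (j + 1), hn j ▸ hin _, by rw [hf, hn j]⟩
  exact Set.infinite_of_injective_forall_mem
    (Subtype.val_injective.comp (hinj.comp Nat.succ_injective)) hmem ((Set.finite_Iic _).image _)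

/-- Let `G` be the join of paths of length `n` for every `n`, and `H` the join
of `G` with one infinite ray. Then `d(G,H) = 0`, i.e. `G` and `H` contain
exactly the same isomorphism types of finite rooted connected induced
subgraphs, although `G` and `H` are not isomorphic. -/
theorem pathsJoin_distance_zero_not_iso :
    RGraph.dR pathsJoin pathsRayJoin = 0 ∧
    (∀ F : RGraph, Finite F.verts →
      (pathsJoin.HasRCIS F ↔ pathsRayJoin.HasRCIS F)) ∧
    ¬ pathsJoin.Iso pathsRayJoin := by
  have hrcis : ∀ F : RGraph, Finite F.verts → (pathsJoin.HasRCIS F ↔ pathsRayJoin.HasRCIS F) :=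
    fun F hF => ⟨.of_embedding pathsJoinEmbedding rfl,
      .of_finite_embedding pathsRayJoin_finite_embedding hF⟩
  exact ⟨RGraph.dR_eq_zero_of_forall_simUpTo fun _ F hF _ => hrcis F hF, hrcis,
    fun e => pathsJoin_not_hasRay (pathsRayJoin_hasRay.of_iso e)⟩
end

section
/- Let T^{(k)}(z) (k ≥ 1) be a sequence of power series with nonnegative coefficients satisfying T^{(1)}(z) = C(z) and the recursion T^{(k+1)}(z) = C(z)·(1 + M(z)·T^{(k)}(z) + E_k(z)), where C(z) has radius of convergence ρ > 0 with C(ρ) < ∞, M(z) is a power series with nonnegative coefficients, radius of convergence > ρ, and E_k(z) has radius of convergence > ρ. Then for every fixed k there is a constant D_k such that [z^n] T^{(k)}(z) ≤ D_k · [z^n] C(z) for all sufficiently large n, provided [z^n]C(z) ~ A·n^{-3/2}·ρ^{-n}. -/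
/-!
After the rescaling `z ↦ ρ z` the claim concerns power series whose coefficients are
`O(n ^ (-3/2))`. Since `∑ n ^ (-3/2) < ∞`, these form a ring: in a Cauchy product
`∑_{i+j=n} a_i b_j` one of `i + 1, j + 1` is at least `(n + 2)/2`, so each term is
`O(n ^ (-3/2))` times `|a_i|` or `|b_j|`, and those sum to a bounded quantity.
Coefficients that are `O(r ^ (-n))` with `r > ρ` rescale to a geometric, hence
`O(n ^ (-3/2))`, sequence, so `M` and every `E k` lie in the ring, and by induction so does
every `T k`. Finally `[zⁿ]C ≍ n ^ (-3/2) ρ ^ (-n)` turns this into a bound by `[zⁿ]C`.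
-/

open Filter PowerSeries Asymptotics Finset

theorem Real.rpow_neg_mul_rpow_neg_le {s a b : ℝ} (hs : 0 ≤ s) (ha : 0 < a) (hb : 0 < b) :
    a ^ (-s) * b ^ (-s) ≤ 2 ^ s * (a + b) ^ (-s) * (a ^ (-s) + b ^ (-s)) := by
  wlog hba : b ≤ a generalizing a b
  · simpa only [add_comm a, add_comm (a ^ (-s)), mul_comm (a ^ (-s))] using
      this hb ha (le_of_not_ge hba)
  have hlarge : a ^ (-s) ≤ 2 ^ s * (a + b) ^ (-s) := calc
    a ^ (-s) ≤ ((a + b) / 2) ^ (-s) :=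
      Real.rpow_le_rpow_of_nonpos (by positivity) (by linarith) (by linarith)
    _ = 2 ^ s * (a + b) ^ (-s) := by
      rw [Real.div_rpow (by positivity) zero_le_two, Real.rpow_neg zero_le_two, div_inv_eq_mul,
        mul_comm]
  calc a ^ (-s) * b ^ (-s) ≤ 2 ^ s * (a + b) ^ (-s) * b ^ (-s) := by gcongr
    _ ≤ 2 ^ s * (a + b) ^ (-s) * (a ^ (-s) + b ^ (-s)) := by
      gcongr
      exact le_add_of_nonneg_left (by positivity)

theorem isTheta_natCast_add_one_rpow (r : ℝ) :
    (fun n : ℕ => ((n : ℝ) + 1) ^ r) =Θ[atTop] fun n : ℕ => (n : ℝ) ^ r := by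
  have hnorm : Tendsto (norm ∘ fun n : ℕ => (n : ℝ)) atTop atTop :=
    tendsto_natCast_atTop_atTop.congr' (.of_forall fun n => by simp)
  exact (IsEquivalent.rpow (fun n => n.cast_nonneg)
    (IsEquivalent.refl.add_const_of_norm_tendsto_atTop hnorm)).isTheta

theorem summable_natCast_add_one_rpow_neg {s : ℝ} (hs : 1 < s) :
    Summable fun n : ℕ => ((n : ℝ) + 1) ^ (-s) := by
  simpa only [Nat.cast_add, Nat.cast_one] using
    (summable_nat_add_iff 1).2 (Real.summable_nat_rpow.2 (neg_lt_neg hs))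

theorem sum_antidiagonal_rpow_neg_isBigO {s : ℝ} (hs : 1 < s) :
    (fun n : ℕ => ∑ p ∈ antidiagonal n, ((p.1 : ℝ) + 1) ^ (-s) * ((p.2 : ℝ) + 1) ^ (-s))
      =O[atTop] fun n : ℕ => ((n : ℝ) + 1) ^ (-s) := by
  set w : ℕ → ℝ := fun n => ((n : ℝ) + 1) ^ (-s)
  have hw : ∀ n, 0 ≤ w n := fun n => by positivity
  have hpartial : ∀ n, ∑ p ∈ antidiagonal n, w p.1 ≤ ∑' k, w k := fun n => by
    rw [Nat.sum_antidiagonal_eq_sum_range_succ (fun i _ => w i)]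
    exact (summable_natCast_add_one_rpow_neg hs).sum_le_tsum _ fun k _ => hw k
  refine IsBigO.of_bound (2 ^ s * (2 * ∑' k, w k)) (.of_forall fun n => ?_)
  rw [Real.norm_of_nonneg (sum_nonneg fun p _ => mul_nonneg (hw _) (hw _)),
    Real.norm_of_nonneg (hw n)]
  calc ∑ p ∈ antidiagonal n, w p.1 * w p.2
      ≤ ∑ p ∈ antidiagonal n, 2 ^ s * w n * (w p.1 + w p.2) := by
        refine sum_le_sum fun p hp => ?_
        have hsum : ((p.1 : ℝ) + 1) + ((p.2 : ℝ) + 1) = (n : ℝ) + 2 := by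
          rw [← mem_antidiagonal.1 hp]; push_cast; ring
        have hprod := Real.rpow_neg_mul_rpow_neg_le (s := s) (by linarith)
          (by positivity : 0 < (p.1 : ℝ) + 1) (by positivity : 0 < (p.2 : ℝ) + 1)
        rw [hsum] at hprod
        refine hprod.trans ?_
        gcongr
        exact Real.rpow_le_rpow_of_nonpos (by positivity) (by linarith) (by linarith)
    _ = 2 ^ s * w n * (∑ p ∈ antidiagonal n, w p.1 + ∑ p ∈ antidiagonal n, w p.2) := by
        rw [← mul_sum, sum_add_distrib]
    _ ≤ 2 ^ s * w n * (∑' k, w k + ∑' k, w k) := by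
        gcongr
        · exact hpartial n
        · exact (Nat.sum_antidiagonal_swap (f := fun p => w p.1)).trans_le (hpartial n)
    _ = 2 ^ s * (2 * ∑' k, w k) * w n := by ring

theorem isBigO_sum_antidiagonal_mul {s : ℝ} (hs : 1 < s) {f g : ℕ → ℝ}
    (hf : f =O[atTop] fun n : ℕ => (n : ℝ) ^ (-s)) (hg : g =O[atTop] fun n : ℕ => (n : ℝ) ^ (-s)) :
    (fun n => ∑ p ∈ antidiagonal n, f p.1 * g p.2) =O[atTop] fun n : ℕ => (n : ℝ) ^ (-s) := by
  rw [← (isTheta_natCast_add_one_rpow (-s)).isBigO_congr_right] at hf hg ⊢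
  set w : ℕ → ℝ := fun n => ((n : ℝ) + 1) ^ (-s)
  have hw : ∀ n, 0 < w n := fun n => by positivity
  obtain ⟨Kf, hKf⟩ := (isBigO_nat_atTop_iff fun n h => absurd h (hw n).ne').1 hf
  obtain ⟨Kg, hKg⟩ := (isBigO_nat_atTop_iff fun n h => absurd h (hw n).ne').1 hg
  simp only [Real.norm_of_nonneg (hw _).le] at hKf hKg
  refine IsBigO.trans ?_ (sum_antidiagonal_rpow_neg_isBigO hs)
  refine IsBigO.of_bound (Kf * Kg) (.of_forall fun n => ?_)
  calc ‖∑ p ∈ antidiagonal n, f p.1 * g p.2‖ ≤ ∑ p ∈ antidiagonal n, ‖f p.1‖ * ‖g p.2‖ :=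
        (norm_sum_le _ _).trans_eq (by simp only [norm_mul])
    _ ≤ ∑ p ∈ antidiagonal n, (Kf * w p.1) * (Kg * w p.2) :=
        sum_le_sum fun p _ =>
          mul_le_mul (hKf _) (hKg _) (norm_nonneg _) ((norm_nonneg _).trans (hKf _))
    _ = Kf * Kg * ‖∑ p ∈ antidiagonal n, w p.1 * w p.2‖ := by
        rw [Real.norm_of_nonneg (sum_nonneg fun p _ => mul_nonneg (hw _).le (hw _).le), mul_sum]
        exact sum_congr rfl fun p _ => by ring

theorem isBigO_pow_rpow_neg {q : ℝ} (hq₀ : 0 < q) (hq₁ : q < 1) (s : ℝ) :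
    (fun n : ℕ => q ^ n) =O[atTop] fun n : ℕ => (n : ℝ) ^ (-s) := by
  have hlog : 0 < -Real.log q := neg_pos.2 (Real.log_neg hq₀ hq₁)
  refine ((isLittleO_exp_neg_mul_rpow_atTop hlog (-s)).comp_tendsto
    tendsto_natCast_atTop_atTop).isBigO.congr_left fun n => ?_
  simp only [Function.comp_apply, neg_neg, mul_comm (Real.log q), Real.exp_nat_mul,
    Real.exp_log hq₀]

theorem Asymptotics.IsBigO.exists_forall_le_mul {f g : ℕ → ℝ} (h : f =O[atTop] g)
    (hg : ∀ᶠ n in atTop, 0 ≤ g n) : ∃ D : ℝ, ∃ N : ℕ, ∀ n ≥ N, f n ≤ D * g n := by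
  obtain ⟨D, hD⟩ := h.bound
  obtain ⟨N, hN⟩ := (hD.and hg).exists_forall_of_atTop
  refine ⟨D, N, fun n hn => ?_⟩
  obtain ⟨hle, hnonneg⟩ := hN n hn
  calc f n ≤ ‖f n‖ := Real.le_norm_self _
    _ ≤ D * ‖g n‖ := hle
    _ = D * g n := by rw [Real.norm_of_nonneg hnonneg]

namespace PowerSeries

def rpowDecaySubring (s : ℝ) (hs : 1 < s) : Subring ℝ⟦X⟧ where
  carrier := {φ | (fun n => coeff n φ) =O[atTop] fun n : ℕ => (n : ℝ) ^ (-s)}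
  mul_mem' {φ ψ} hφ hψ := by
    simpa only [Set.mem_ofPred_eq, coeff_mul] using isBigO_sum_antidiagonal_mul hs hφ hψ
  one_mem' := (isBigO_zero _ _).congr'
    (eventually_ne_atTop 0 |>.mono fun n hn => by simp [coeff_one, hn]) .rfl
  add_mem' hφ hψ := by simpa only [Set.mem_ofPred_eq, map_add] using hφ.add hψ
  zero_mem' := by simpa only [Set.mem_ofPred_eq, map_zero] using isBigO_zero _ _
  neg_mem' hφ := by simpa only [Set.mem_ofPred_eq, map_neg] using hφ.neg_left

variable {s : ℝ} {hs : 1 < s} {ρ : ℝ} {φ : ℝ⟦X⟧}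

theorem rescale_mem_rpowDecaySubring_iff (hρ : ρ ≠ 0) :
    rescale ρ φ ∈ rpowDecaySubring s hs ↔
      (fun n => coeff n φ) =O[atTop] fun n : ℕ => (n : ℝ) ^ (-s) * (ρ ^ n)⁻¹ := by
  change (fun n => coeff n (rescale ρ φ)) =O[atTop] _ ↔ _
  simp only [coeff_rescale]
  constructor
  · refine fun h => (h.mul (isBigO_refl (fun n : ℕ => (ρ ^ n)⁻¹) _)).congr_left fun n => ?_
    field_simp
  · refine fun h => ((isBigO_refl (fun n : ℕ => ρ ^ n) _).mul h).congr_right fun n => ?_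
    field_simp

theorem rescale_mem_rpowDecaySubring_of_abs_coeff_le {r K : ℝ} (hρ : 0 < ρ) (hρr : ρ < r)
    (hφ : ∀ n, |coeff n φ| ≤ K / r ^ n) : rescale ρ φ ∈ rpowDecaySubring s hs := by
  have hr : 0 < r := hρ.trans hρr
  change (fun n => coeff n (rescale ρ φ)) =O[atTop] _
  refine IsBigO.trans (isBigO_of_le' (c := K) _ fun n => ?_)
    (isBigO_pow_rpow_neg (div_pos hρ hr) ((div_lt_one hr).2 hρr) s)
  simp only [coeff_rescale, norm_mul, Real.norm_eq_abs, abs_pow, abs_div, abs_of_pos hρ,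
    abs_of_pos hr]
  calc ρ ^ n * |coeff n φ| ≤ ρ ^ n * (K / r ^ n) := by gcongr; exact hφ n
    _ = K * (ρ / r) ^ n := by rw [div_pow]; ring

end PowerSeries

theorem coefficient_comparison_general (ρ A : ℝ) (hρ : 0 < ρ) (hA : 0 < A)
    (C M : PowerSeries ℝ) (E : ℕ → PowerSeries ℝ) (T : ℕ → PowerSeries ℝ)
    (hT1 : T 1 = C)
    (hrec : ∀ k ≥ 1, T (k + 1) = C * (1 + M * T k + E k))
    (hM : ∃ ρ' > ρ, ∃ K : ℝ, ∀ n, |coeff n M| ≤ K / ρ' ^ n)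
    (hE : ∀ k, ∃ ρ' > ρ, ∃ K : ℝ, ∀ n, |coeff n (E k)| ≤ K / ρ' ^ n)
    (hC : Tendsto
      (fun n : ℕ => coeff n C / (A * (n : ℝ) ^ (-(3 : ℝ) / 2) * (ρ ^ n)⁻¹))
      atTop (nhds 1)) :
    ∀ k ≥ 1, ∃ D : ℝ, ∃ N : ℕ, ∀ n ≥ N,
      coeff n (T k) ≤ D * coeff n C := by
  rw [neg_div] at hC
  set S := rpowDecaySubring (3 / 2) (by norm_num)
  have hCθ : (fun n => coeff n C) =Θ[atTop] fun n : ℕ => (n : ℝ) ^ (-(3 / 2 : ℝ)) * (ρ ^ n)⁻¹ :=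
    (isEquivalent_of_tendsto_one hC).isTheta.trans <| by
      simpa only [mul_assoc] using (isTheta_refl _ _).const_mul_left hA.ne'
  have hCnonneg : ∀ᶠ n in atTop, 0 ≤ coeff n C := by
    filter_upwards [hC.eventually_const_lt one_pos, eventually_ge_atTop 1] with n hn hn1
    have : (0 : ℝ) < n := by exact_mod_cast hn1
    exact ((div_pos_iff_of_pos_right (by positivity)).1 hn).le
  have hS_of_bound : ∀ {φ : ℝ⟦X⟧}, (∃ ρ' > ρ, ∃ K : ℝ, ∀ n, |coeff n φ| ≤ K / ρ' ^ n) →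
      rescale ρ φ ∈ S := fun ⟨_, hρ', _, hK⟩ =>
    rescale_mem_rpowDecaySubring_of_abs_coeff_le hρ hρ' hK
  have hCS : rescale ρ C ∈ S := (rescale_mem_rpowDecaySubring_iff hρ.ne').2 hCθ.1
  have hTS : ∀ k ≥ 1, rescale ρ (T k) ∈ S := by
    intro k hk
    induction k, hk using Nat.le_induction with
    | base => rwa [hT1]
    | succ k hk ih =>
      rw [hrec k hk, map_mul, map_add, map_add, map_one, map_mul]
      exact S.mul_mem hCS (S.add_mem (S.add_mem S.one_mem (S.mul_mem (hS_of_bound hM) ih))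
        (hS_of_bound (hE k)))
  intro k hk
  exact (((rescale_mem_rpowDecaySubring_iff hρ.ne').1 (hTS k hk)).trans hCθ.2).exists_forall_le_mul
    hCnonneg

/-- Inductive coefficient-comparison step: if `T⁽¹⁾ = C`,
`T⁽ᵏ⁺¹⁾ = C·(1 + M·T⁽ᵏ⁾ + E_k)`, all coefficients of `T⁽ᵏ⁾` and `M` are
nonnegative, `M` and each `E_k` have radius of convergence `> ρ`, and the
coefficients of `C` satisfy `[zⁿ]C ~ A·n^(−3/2)·ρ^(−n)`, then for each fixed
`k` the coefficients of `T⁽ᵏ⁾` are eventually bounded by a constant multiple of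
those of `C`. -/
theorem coefficient_comparison (ρ A : ℝ) (hρ : 0 < ρ) (hA : 0 < A)
    (C M : PowerSeries ℝ) (E : ℕ → PowerSeries ℝ) (T : ℕ → PowerSeries ℝ)
    (hT1 : T 1 = C)
    (hrec : ∀ k ≥ 1, T (k + 1) = C * (1 + M * T k + E k))
    (hTnonneg : ∀ k n, 0 ≤ coeff n (T k))
    (hMnonneg : ∀ n, 0 ≤ coeff n M)
    (hM : ∃ ρ' > ρ, ∃ K : ℝ, ∀ n, |coeff n M| ≤ K / ρ' ^ n)
    (hE : ∀ k, ∃ ρ' > ρ, ∃ K : ℝ, ∀ n, |coeff n (E k)| ≤ K / ρ' ^ n)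
    (hC : Tendsto
      (fun n : ℕ => coeff n C / (A * (n : ℝ) ^ (-(3 : ℝ) / 2) * (ρ ^ n)⁻¹))
      atTop (nhds 1)) :
    ∀ k ≥ 1, ∃ D : ℝ, ∃ N : ℕ, ∀ n ≥ N,
      coeff n (T k) ≤ D * coeff n C :=
  coefficient_comparison_general ρ A hρ hA C M E T hT1 hrec hM hE hC
end
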